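/- Assume hypothesis (M): every subset of ℝ of cardinality 𝔠 admits a continuous surjection onto the closed interval [0,1]. Let X be a nonempty separable metrizable space. Then C_ph(X) is separable if and only if Δ(X) = 𝔠. -/

import Mathlib

open TopologicalSpace Set Topology

/-- The point-open topology `p` on `C(X, ℝ)`. -/
def pointOpenTopology (X : Type*) [TopologicalSpace X] : TopologicalSpace C(X, ℝ) :=
  generateFrom {S | ∃ (x : X) (U : Set ℝ), IsOpen U ∧ S = {f : C(X, ℝ) | f x ∈ U}}

/-- The open-point topology `h` on `C(X, ℝ)`. -/
def openPointTopology (X : Type*) [TopologicalSpace X] : TopologicalSpace C(X, ℝ) :=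
  generateFrom {S | ∃ (V : Set X) (r : ℝ), IsOpen V ∧ S = {f : C(X, ℝ) | ∃ x ∈ V, f x = r}}

/-- The bi-point-open topology `ph` on `C(X, ℝ)`: generated by both kinds of subbasic sets. -/
def biPointOpenTopology (X : Type*) [TopologicalSpace X] : TopologicalSpace C(X, ℝ) :=
  generateFrom
    ({S | ∃ (x : X) (U : Set ℝ), IsOpen U ∧ S = {f : C(X, ℝ) | f x ∈ U}} ∪
     {S | ∃ (V : Set X) (r : ℝ), IsOpen V ∧ S = {f : C(X, ℝ) | ∃ x ∈ V, f x = r}})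

/-- The dispersion character: minimum cardinality of a nonempty open subset. -/
noncomputable def dispersionCharacter (X : Type*) [TopologicalSpace X] : Cardinal :=
  sInf {c | ∃ U : Set X, IsOpen U ∧ U.Nonempty ∧ c = Cardinal.mk U}

/-- A π-network: a family of nonempty subsets such that every nonempty open set contains one. -/
def IsPiNetwork {X : Type*} [TopologicalSpace X] (γ : Set (Set X)) : Prop :=
  (∀ A ∈ γ, A.Nonempty) ∧ ∀ U : Set X, IsOpen U → U.Nonempty → ∃ A ∈ γ, A ⊆ U

/-- A π-base: a family of nonempty open subsets such that every nonempty open set contains one. -/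
def IsPiBase {X : Type*} [TopologicalSpace X] (γ : Set (Set X)) : Prop :=
  (∀ A ∈ γ, IsOpen A ∧ A.Nonempty) ∧ ∀ U : Set X, IsOpen U → U.Nonempty → ∃ A ∈ γ, A ⊆ U

/-- A network. -/
def IsNetwork {X : Type*} [TopologicalSpace X] (𝒩 : Set (Set X)) : Prop :=
  ∀ (x : X) (U : Set X), IsOpen U → x ∈ U → ∃ N ∈ 𝒩, x ∈ N ∧ N ⊆ U

/-- An 𝓘-set. -/
def IsISet {X : Type*} [TopologicalSpace X] (A : Set X) : Prop :=
  ∃ (f : X → ℝ) (a b : ℝ), Continuous f ∧ a < b ∧ Icc a b ⊆ f '' A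

/-- A T₀-separating family. -/
def T0Separating {X : Type*} (γ : Set (Set X)) : Prop :=
  ∀ x y : X, x ≠ y → ∃ V ∈ γ, (x ∈ V ∧ y ∉ V) ∨ (y ∈ V ∧ x ∉ V)

/-- A zero-set. -/
def IsZeroSet {X : Type*} [TopologicalSpace X] (Z : Set X) : Prop :=
  ∃ f : X → ℝ, Continuous f ∧ Z = f ⁻¹' {0}

/-- Separable submetrizable: admits a coarser separable metrizable topology. -/
def SeparableSubmetrizable (X : Type*) [t : TopologicalSpace X] : Prop :=
  ∃ t' : TopologicalSpace X, (∀ U : Set X, IsOpen[t'] U → IsOpen[t] U) ∧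
    @SeparableSpace X t' ∧ @MetrizableSpace X t'

/-- Hypothesis (M). -/
def HypothesisM : Prop :=
  ∀ A : Set ℝ, Cardinal.mk A = Cardinal.continuum →
    ∃ f : A → ℝ, Continuous f ∧ Set.range f = Icc (0 : ℝ) 1


/-!
If `D` is a countable dense subset of `C_ph(X)`, then for a nonempty open `U` and every `r : ℝ`
the open set `[U, r]⁻` meets `D`, so `ℝ = ⋃ f ∈ D, f '' U` and `𝔠 ≤ #U`; and `#X ≤ 𝔠` because
`X` is second countable.

Conversely, let every nonempty open set have size `𝔠`. A closed ball `C` then carries a continuous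
real function with range of size `𝔠`: a distance function, or, if every distance function has a
small range, the balls whose radii are omitted values are clopen and separate points, which gives
a continuous injection into the Cantor set. Hypothesis (M) turns this function into a map onto
`[0, 1]`, and Tietze extends it to some `S` on `X`. With Urysohn bumps `φ` that are `1` on `C`,
the finite sums `∑ φ * (a + S)` over countably many balls and rationals `a` form a dense subset of
`C_ph(X)`: given finitely many points (with target values) and finitely many pairs `(V, r)`, pick
distinct points in the sets `V`, give all these points pairwise disjoint small balls, and use
`a ≈ value - S x` at a prescribed point `x`, and `r - a ∈ [0, 1]` on a ball inside `V`.
-/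

open Cardinal

section Cardinality

variable {X : Type*} [TopologicalSpace X]

theorem mk_le_continuum_of_secondCountableTopology [T0Space X] [SecondCountableTopology X] :
    #X ≤ 𝔠 := by
  obtain ⟨S, -, hS⟩ := exists_seq_separating X isOpen_univ univ
  have hinj : Function.Injective fun x : X => {n | x ∈ S n} := fun x y hxy =>
    hS x trivial y trivial fun n => Set.ext_iff.1 hxy n
  simpa [mk_set_nat] using lift_mk_le_lift_mk_of_injective hinj

theorem dispersionCharacter_le_mk {U : Set X} (hU : IsOpen U) (hne : U.Nonempty) :
    dispersionCharacter X ≤ #U :=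
  csInf_le' ⟨U, hU, hne, rfl⟩

theorem dispersionCharacter_eq_continuum [Nonempty X] (hX : #X ≤ 𝔠)
    (h : ∀ U : Set X, IsOpen U → U.Nonempty → 𝔠 ≤ #U) :
    dispersionCharacter X = 𝔠 := by
  refine le_antisymm ((dispersionCharacter_le_mk isOpen_univ univ_nonempty).trans ?_) ?_
  · rwa [mk_univ]
  · exact le_csInf ⟨_, univ, isOpen_univ, univ_nonempty, rfl⟩ fun c ⟨U, hU, hne, hc⟩ =>
      hc ▸ h U hU hne

end Cardinality

section BiPointOpen

variable {X : Type*} [TopologicalSpace X]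

def biPointOpenSubbasis (X : Type*) [TopologicalSpace X] : Set (Set C(X, ℝ)) :=
  {S | ∃ (x : X) (U : Set ℝ), IsOpen U ∧ S = {f : C(X, ℝ) | f x ∈ U}} ∪
    {S | ∃ (V : Set X) (r : ℝ), IsOpen V ∧ S = {f : C(X, ℝ) | ∃ x ∈ V, f x = r}}

theorem biPointOpenTopology_eq_generateFrom :
    biPointOpenTopology X = generateFrom (biPointOpenSubbasis X) :=
  rfl

theorem continuum_le_mk_of_separableSpace_biPointOpen
    (hsep : @SeparableSpace C(X, ℝ) (biPointOpenTopology X)) {U : Set X} (hU : IsOpen U)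
    (hne : U.Nonempty) : 𝔠 ≤ #U := by
  obtain ⟨D, hDc, hD⟩ := @exists_countable_dense _ (biPointOpenTopology X) hsep
  have hsurj : Function.Surjective fun p : D × U => (p.1 : C(X, ℝ)) p.2 := by
    intro r
    have hopen : IsOpen[biPointOpenTopology X] {f : C(X, ℝ) | ∃ x ∈ U, f x = r} :=
      isOpen_generateFrom_of_mem (Or.inr ⟨U, r, hU, rfl⟩)
    obtain ⟨f, ⟨x, hx, hfx⟩, hfD⟩ := @Dense.inter_open_nonempty _ (biPointOpenTopology X) _ hD _
      hopen ⟨ContinuousMap.const X r, hne.some, hne.some_mem, rfl⟩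
    exact ⟨(⟨f, hfD⟩, ⟨x, hx⟩), hfx⟩
  by_contra! hlt
  have hprod : #(D × U) < 𝔠 := by
    rw [mk_prod, lift_id, lift_id]
    exact mul_lt_of_lt aleph0_le_continuum
      ((mk_le_aleph0_iff.2 hDc.to_subtype).trans_lt aleph0_lt_continuum) hlt
  have := lift_mk_le_lift_mk_of_surjective hsurj
  rw [mk_real, lift_continuum] at this
  exact this.not_gt (lift_lt_continuum.2 hprod)

def biPointOpenNhd (f₀ : C(X, ℝ)) (A : Finset X) (ε : ℝ) (H : Finset (Set X × ℝ)) :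
    Set C(X, ℝ) :=
  {f | (∀ x ∈ A, |f x - f₀ x| < ε) ∧ ∀ p ∈ H, ∃ x ∈ p.1, f x = p.2}

theorem biPointOpenNhd_mono {f₀ : C(X, ℝ)} {A A' : Finset X} {ε ε' : ℝ}
    {H H' : Finset (Set X × ℝ)} (hA : A ⊆ A') (hε : ε' ≤ ε) (hH : H ⊆ H') :
    biPointOpenNhd f₀ A' ε' H' ⊆ biPointOpenNhd f₀ A ε H :=
  fun _ hf => ⟨fun x hx => (hf.1 x (hA hx)).trans_le hε, fun p hp => hf.2 p (hH hp)⟩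

theorem exists_biPointOpenNhd_subset_sInter {F : Set (Set C(X, ℝ))} (hF : F.Finite)
    (hFsub : F ⊆ biPointOpenSubbasis X) {f₀ : C(X, ℝ)} (hf₀ : f₀ ∈ ⋂₀ F) :
    ∃ (A : Finset X) (ε : ℝ) (H : Finset (Set X × ℝ)), 0 < ε ∧
      (∀ p ∈ H, IsOpen p.1 ∧ p.1.Nonempty) ∧ biPointOpenNhd f₀ A ε H ⊆ ⋂₀ F := by
  classical
  induction F, hF using Set.Finite.induction_on with
  | empty => exact ⟨∅, 1, ∅, one_pos, by simp, by simp⟩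
  | @insert T F _ _ ih =>
    rw [sInter_insert] at hf₀ ⊢
    obtain ⟨A, ε, H, hε, hH, hsub⟩ := ih ((subset_insert T F).trans hFsub) hf₀.2
    rcases hFsub (mem_insert T F) with ⟨x, U, hU, rfl⟩ | ⟨V, r, hV, rfl⟩
    · obtain ⟨δ, hδ, hball⟩ := Metric.isOpen_iff.1 hU _ hf₀.1
      refine ⟨insert x A, min ε δ, H, lt_min hε hδ, hH, fun f hf => ⟨?_, ?_⟩⟩
      · exact hball ((hf.1 x (Finset.mem_insert_self x A)).trans_le (min_le_right ε δ))
      · exact hsub (biPointOpenNhd_mono (Finset.subset_insert x A) (min_le_left ε δ) le_rfl hf)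
    · obtain ⟨y, hy, -⟩ := hf₀.1
      refine ⟨A, ε, insert (V, r) H, hε, ?_, fun f hf => ⟨?_, ?_⟩⟩
      · exact Finset.forall_mem_insert _ _ _ |>.2 ⟨⟨hV, y, hy⟩, hH⟩
      · exact hf.2 (V, r) (Finset.mem_insert_self _ H)
      · exact hsub (biPointOpenNhd_mono le_rfl le_rfl (Finset.subset_insert _ H) hf)

theorem dense_biPointOpen_of_forall_nhd {D : Set C(X, ℝ)}
    (hD : ∀ (f₀ : C(X, ℝ)) (A : Finset X) (ε : ℝ) (H : Finset (Set X × ℝ)), 0 < ε →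
      (∀ p ∈ H, IsOpen p.1 ∧ p.1.Nonempty) → (biPointOpenNhd f₀ A ε H ∩ D).Nonempty) :
    @Dense C(X, ℝ) (biPointOpenTopology X) D := by
  let _ := biPointOpenTopology X
  rw [(isTopologicalBasis_of_subbasis biPointOpenTopology_eq_generateFrom).dense_iff]
  rintro _ ⟨F, ⟨hF, hFsub⟩, rfl⟩ ⟨f₀, hf₀⟩
  obtain ⟨A, ε, H, hε, hH, hsub⟩ := exists_biPointOpenNhd_subset_sInter hF hFsub hf₀
  exact (hD f₀ A ε H hε hH).mono (inter_subset_inter_left D hsub)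

end BiPointOpen

theorem exists_continuous_injective_of_isClopen_separating {S ι : Type*} [TopologicalSpace S]
    [Countable ι] [Nonempty ι] (U : ι → Set S) (hU : ∀ i, IsClopen (U i))
    (hsep : ∀ x y, x ≠ y → ∃ i, x ∈ U i ∧ y ∉ U i) :
    ∃ F : S → ℝ, Continuous F ∧ Function.Injective F := by
  obtain ⟨e, he⟩ := exists_surjective_nat ι
  let β : S → ℕ → Bool := fun x k => (U (e k)).boolIndicator x
  have hβ : Continuous β :=
    continuous_pi fun k => (continuous_boolIndicator_iff_isClopen _).2 (hU (e k))
  have hβinj : Function.Injective β := by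
    intro x y hxy
    by_contra hne
    obtain ⟨i, hx, hy⟩ := hsep x y hne
    obtain ⟨k, rfl⟩ := he i
    rw [mem_iff_boolIndicator] at hx
    rw [notMem_iff_boolIndicator] at hy
    exact Bool.true_eq_false.mp (hx ▸ hy ▸ congrFun hxy k)
  exact ⟨fun x => cantorSetHomeomorphNatToBool.symm (β x),
    continuous_subtype_val.comp (cantorSetHomeomorphNatToBool.symm.continuous.comp hβ),
    Subtype.val_injective.comp (cantorSetHomeomorphNatToBool.symm.injective.comp hβinj)⟩

theorem Real.dense_compl_of_mk_lt_continuum {s : Set ℝ} (hs : #s < 𝔠) : Dense sᶜ :=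
  dense_of_exists_between fun a b hab => by
    obtain ⟨c, hc, hcs⟩ := not_subset.1 fun hsub : Ioo a b ⊆ s =>
      ((mk_Ioo_real hab).symm.trans_le (mk_le_mk_of_subset hsub)).not_gt hs
    exact ⟨c, hcs, hc⟩

theorem exists_continuous_continuum_le_mk_range {S : Type*} [MetricSpace S] [SeparableSpace S]
    (hS : 𝔠 ≤ #S) : ∃ f : S → ℝ, Continuous f ∧ 𝔠 ≤ #(range f) := by
  have : Nonempty S := mk_ne_zero_iff.1 (continuum_pos.trans_le hS).ne'
  obtain ⟨q, hq⟩ := exists_dense_seq S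
  by_cases hlarge : ∃ n, 𝔠 ≤ #(range fun x => dist x (q n))
  · obtain ⟨n, hn⟩ := hlarge
    exact ⟨_, continuous_id.dist continuous_const, hn⟩
  push Not at hlarge
  have hgaps : ∀ n, ∃ C ⊆ (range fun x => dist x (q n))ᶜ, C.Countable ∧ Dense C :=
    fun n => (Real.dense_compl_of_mk_lt_continuum (hlarge n)).exists_countable_dense_subset
  choose C hCgap hCc hCd using hgaps
  have : ∀ n, Countable (C n) := fun n => (hCc n).to_subtype
  have : Nonempty (Σ n, C n) := ⟨⟨0, (hCd 0).nonempty.some, (hCd 0).nonempty.some_mem⟩⟩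
  -- a sphere of radius `c ∉ range (dist · (q n))` is empty, so this open ball is also closed
  let U : (Σ n, C n) → Set S := fun c => {x | dist x (q c.1) < c.2}
  have hU : ∀ c, IsClopen (U c) := by
    rintro ⟨n, c, hc⟩
    refine ⟨?_, isOpen_lt (continuous_id.dist continuous_const) continuous_const⟩
    convert isClosed_le (continuous_id.dist continuous_const) continuous_const using 1
    ext x
    show dist x (q n) < c ↔ dist x (q n) ≤ c
    exact ⟨le_of_lt, fun h => lt_of_le_of_ne h fun he => hCgap n hc ⟨x, he⟩⟩
  have hsep : ∀ x y, x ≠ y → ∃ c, x ∈ U c ∧ y ∉ U c := by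
    intro x y hxy
    obtain ⟨n, hn⟩ := hq.exists_dist_lt x (half_pos (dist_pos.2 hxy))
    have hy : dist x y / 2 < dist y (q n) := by
      linarith [dist_triangle_right x y (q n)]
    obtain ⟨c, hc, hxc, hcy⟩ := (hCd n).exists_between (hn.trans hy)
    exact ⟨⟨n, c, hc⟩, hxc, hcy.not_gt⟩
  obtain ⟨F, hF, hFinj⟩ := exists_continuous_injective_of_isClopen_separating U hU hsep
  refine ⟨F, hF, ?_⟩
  rw [← lift_le, lift_continuum, mk_range_eq_of_injective hFinj]
  simpa using hS

theorem Finset.exists_injOn_mem_diff {ι α : Type*} [Nonempty α] (s : Finset ι) {V : ι → Set α}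
    (hV : ∀ i ∈ s, (V i).Infinite) {A : Set α} (hA : A.Finite) :
    ∃ z : ι → α, InjOn z s ∧ ∀ i ∈ s, z i ∈ V i \ A := by
  classical
  induction s using Finset.induction_on with
  | empty => exact ⟨fun _ => Classical.arbitrary α, by simp, by simp⟩
  | @insert i s hi ih =>
    obtain ⟨z, hzinj, hz⟩ := ih fun j hj => hV j (Finset.mem_insert_of_mem hj)
    obtain ⟨y, hyV, hy⟩ :=
      ((hV i (Finset.mem_insert_self i s)).sdiff (hA.union (s.finite_toSet.image z))).nonempty
    have hzi : ∀ j ∈ s, Function.update z i y j = z j := fun j hj =>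
      Function.update_of_ne (ne_of_mem_of_not_mem hj hi) _ _
    refine ⟨Function.update z i y, ?_, ?_⟩
    · rw [Finset.coe_insert, injOn_insert (Finset.mem_coe.not.2 hi), Function.update_self]
      refine ⟨(hzinj.congr fun j hj => (hzi j hj).symm), ?_⟩
      rintro ⟨j, hj, hjy⟩
      exact hy (Or.inr ⟨j, hj, (hzi j hj).symm.trans hjy⟩)
    · simp only [Finset.forall_mem_insert, Function.update_self]
      exact ⟨⟨hyV, fun h => hy (Or.inl h)⟩, fun j hj => hzi j hj ▸ hz j hj⟩

structure BumpSystem (X ι : Type*) [TopologicalSpace X] where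
  inner : ι → Set X
  outer : ι → Set X
  bump : ι → C(X, ℝ)
  hitter : ι → C(X, ℝ)
  bump_eqOn_inner : ∀ i, EqOn (bump i) 1 (inner i)
  bump_eqOn_compl_outer : ∀ i, EqOn (bump i) 0 (outer i)ᶜ
  Icc_subset_hitter_image : ∀ i, Icc 0 1 ⊆ hitter i '' inner i
  exists_inner_outer_subset : ∀ x W, IsOpen W → x ∈ W → ∃ i, x ∈ inner i ∧ outer i ⊆ W

namespace BumpSystem

variable {X ι : Type*} [TopologicalSpace X] (B : BumpSystem X ι)

theorem inner_subset_outer (i : ι) : B.inner i ⊆ B.outer i := fun x hx => by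
  by_contra hout
  simpa using (B.bump_eqOn_inner i hx).symm.trans (B.bump_eqOn_compl_outer i hout)

def combination (s : Finset (ι × ℚ)) : C(X, ℝ) :=
  ∑ t ∈ s, B.bump t.1 * (ContinuousMap.const X (t.2 : ℝ) + B.hitter t.1)

theorem combination_apply_of_mem_inner {s : Finset (ι × ℚ)} {t : ι × ℚ} (ht : t ∈ s) {x : X}
    (hx : x ∈ B.inner t.1) (hother : ∀ t' ∈ s, t' ≠ t → x ∉ B.outer t'.1) :
    B.combination s x = t.2 + B.hitter t.1 x := by
  rw [combination, ContinuousMap.sum_apply, Finset.sum_eq_single_of_mem t ht]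
  · simp [B.bump_eqOn_inner t.1 hx]
  · intro t' ht' hne
    simp [B.bump_eqOn_compl_outer t'.1 (hother t' ht' hne)]

theorem combination_image_apply [DecidableEq ι] {κ : Type*} {R : Finset κ} {τ : κ → ι × ℚ}
    (hdisj : (R : Set κ).PairwiseDisjoint fun r => B.outer (τ r).1) {r : κ} (hr : r ∈ R) {y : X}
    (hy : y ∈ B.inner (τ r).1) :
    B.combination (R.image τ) y = (τ r).2 + B.hitter (τ r).1 y := by
  refine B.combination_apply_of_mem_inner (Finset.mem_image_of_mem τ hr) hy ?_
  simp only [Finset.mem_image]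
  rintro _ ⟨r', hr', rfl⟩ hne hy'
  exact Set.disjoint_left.1 (hdisj hr' hr fun h => hne (congrArg τ h)) hy'
    (B.inner_subset_outer _ hy)

theorem exists_approx_at {x : X} {W : Set X} (hW : IsOpen W) (hx : x ∈ W) (v : ℝ) {ε : ℝ}
    (hε : 0 < ε) : ∃ t : ι × ℚ, x ∈ B.inner t.1 ∧ B.outer t.1 ⊆ W ∧
      |t.2 + B.hitter t.1 x - v| < ε := by
  obtain ⟨i, hxi, hiW⟩ := B.exists_inner_outer_subset x W hW hx
  obtain ⟨a, ha₁, ha₂⟩ := exists_rat_btwn (by linarith : v - B.hitter i x - ε < v - B.hitter i x)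
  exact ⟨(i, a), hxi, hiW, abs_sub_lt_iff.2 ⟨by linarith, by linarith⟩⟩

theorem exists_hit_inside {x : X} {W : Set X} (hW : IsOpen W) (hx : x ∈ W) (r : ℝ) :
    ∃ t : ι × ℚ, x ∈ B.inner t.1 ∧ B.outer t.1 ⊆ W ∧
      ∃ y ∈ B.inner t.1, t.2 + B.hitter t.1 y = r := by
  obtain ⟨i, hxi, hiW⟩ := B.exists_inner_outer_subset x W hW hx
  obtain ⟨a, ha₁, ha₂⟩ := exists_rat_btwn (by linarith : r - 1 < r)
  obtain ⟨y, hy, hya⟩ := B.Icc_subset_hitter_image i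
    (show r - a ∈ Icc (0 : ℝ) 1 from ⟨by linarith, by linarith⟩)
  exact ⟨(i, a), hxi, hiW, y, hy, by rw [hya]; ring⟩

theorem exists_combination_mem_biPointOpenNhd [T2Space X] [Nonempty X]
    (hinf : ∀ V : Set X, IsOpen V → V.Nonempty → V.Infinite) (f₀ : C(X, ℝ)) (A : Finset X)
    {ε : ℝ} (hε : 0 < ε) (H : Finset (Set X × ℝ)) (hH : ∀ p ∈ H, IsOpen p.1 ∧ p.1.Nonempty) :
    ∃ s, B.combination s ∈ biPointOpenNhd f₀ A ε H := by
  classical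
  obtain ⟨z, hzinj, hz⟩ := H.exists_injOn_mem_diff
    (fun p hp => hinf p.1 (hH p hp).1 (hH p hp).2) A.finite_toSet
  -- every requirement `r` (a point of `A` or a pair in `H`) gets its own point `pt r`, and these
  -- distinct points get pairwise disjoint neighbourhoods `W`
  let R := A.disjSum H
  let pt : X ⊕ (Set X × ℝ) → X := Sum.elim id z
  have hpt : InjOn pt R :=
    (InjOn.sumElim (s := ((A : Set X), (H : Set (Set X × ℝ)))) (injOn_id _) hzinj
      fun x hx p hp h => (hz p hp).2 (h ▸ hx)).mono (by rintro (x | p) hr <;> simpa [R] using hr)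
  have : Nonempty ι :=
    ⟨(B.exists_inner_outer_subset (Classical.arbitrary X) univ isOpen_univ trivial).choose⟩
  obtain ⟨W, hW, hWdisj⟩ := (R.finite_toSet.image pt).t2_separation
  have hτ : ∀ r ∈ R, ∃ t : ι × ℚ, pt r ∈ B.inner t.1 ∧ B.outer t.1 ⊆ W (pt r) ∧
      Sum.elim (fun x => |t.2 + B.hitter t.1 x - f₀ x| < ε)
        (fun p => B.outer t.1 ⊆ p.1 ∧ ∃ y ∈ B.inner t.1, t.2 + B.hitter t.1 y = p.2) r := by
    rintro (x | p) hr
    · exact B.exists_approx_at (hW x).2 (hW x).1 (f₀ x) hε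
    · have hp : p ∈ H := Finset.inr_mem_disjSum.1 hr
      obtain ⟨t, ht, hsub, hhit⟩ :=
        B.exists_hit_inside ((hW (z p)).2.inter (hH p hp).1) ⟨(hW (z p)).1, (hz p hp).1⟩ p.2
      exact ⟨t, ht, hsub.trans inter_subset_left, hsub.trans inter_subset_right, hhit⟩
  choose! τ hτin hτW hτreq using hτ
  have hdisj : (R : Set (X ⊕ (Set X × ℝ))).PairwiseDisjoint fun r => B.outer (τ r).1 :=
    fun r hr r' hr' hne => (hWdisj (mem_image_of_mem pt hr) (mem_image_of_mem pt hr')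
      (hpt.ne hr hr' hne)).mono (hτW r hr) (hτW r' hr')
  refine ⟨R.image τ, fun x hx => ?_, fun p hp => ?_⟩
  · have hr : Sum.inl x ∈ R := Finset.inl_mem_disjSum.2 hx
    rw [B.combination_image_apply hdisj hr (y := x) (hτin _ hr)]
    exact hτreq _ hr
  · have hr : Sum.inr p ∈ R := Finset.inr_mem_disjSum.2 hp
    obtain ⟨hsub, y, hy, hyr⟩ := hτreq _ hr
    exact ⟨y, hsub (B.inner_subset_outer _ hy), (B.combination_image_apply hdisj hr hy).trans hyr⟩

end BumpSystem

theorem DenseRange.exists_mem_closedBall_ball_subset {X : Type*} [PseudoMetricSpace X]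
    {q : ℕ → X} (hq : DenseRange q) {x : X} {W : Set X} (hW : IsOpen W) (hx : x ∈ W) :
    ∃ n : ℕ × ℕ, x ∈ Metric.closedBall (q n.1) (n.2 + 1 : ℝ)⁻¹ ∧
      Metric.ball (q n.1) (2 * (n.2 + 1 : ℝ)⁻¹) ⊆ W := by
  obtain ⟨ε, hε, hball⟩ := Metric.isOpen_iff.1 hW x hx
  obtain ⟨m, hm⟩ := exists_nat_one_div_lt (div_pos hε three_pos)
  obtain ⟨i, hi⟩ := hq.exists_dist_lt x (by positivity : (0 : ℝ) < (m + 1 : ℝ)⁻¹)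
  refine ⟨(i, m), Metric.mem_closedBall.2 hi.le, fun y hy => hball ?_⟩
  rw [one_div] at hm
  rw [Metric.mem_ball] at hy ⊢
  linarith [dist_triangle y (q i) x, dist_comm x (q i)]

namespace HypothesisM

theorem exists_continuous_Icc_subset_range (hM : HypothesisM) {S : Type*} [TopologicalSpace S]
    {f : S → ℝ} (hf : Continuous f) (hrange : 𝔠 ≤ #(range f)) :
    ∃ g : S → ℝ, Continuous g ∧ Icc 0 1 ⊆ range g := by
  obtain ⟨g, hg, hgr⟩ := hM (range f) (le_antisymm (mk_real ▸ mk_set_le _) hrange)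
  refine ⟨g ∘ rangeFactorization f, hg.comp (hf.subtype_mk _), ?_⟩
  rw [rangeFactorization_surjective.range_comp, hgr]

theorem exists_Icc_subset_image (hM : HypothesisM) {X : Type*} [MetricSpace X]
    [SeparableSpace X] {C : Set X} (hC : IsClosed C) (hcard : 𝔠 ≤ #C) :
    ∃ S : C(X, ℝ), Icc 0 1 ⊆ S '' C := by
  obtain ⟨f, hf, hfr⟩ := exists_continuous_continuum_le_mk_range hcard
  obtain ⟨g, hg, hgr⟩ := hM.exists_continuous_Icc_subset_range hf hfr
  obtain ⟨S, hS⟩ := ContinuousMap.exists_restrict_eq hC ⟨g, hg⟩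
  refine ⟨S, hgr.trans ?_⟩
  rintro _ ⟨c, rfl⟩
  exact ⟨c, c.2, congrArg (fun h : C(C, ℝ) => h c) hS⟩

theorem nonempty_bumpSystem (hM : HypothesisM) {X : Type*} [MetricSpace X] [SeparableSpace X]
    [Nonempty X] (hcard : ∀ U : Set X, IsOpen U → U.Nonempty → 𝔠 ≤ #U) :
    Nonempty (BumpSystem X (ℕ × ℕ)) := by
  obtain ⟨q, hq⟩ := exists_dense_seq X
  let ρ : ℕ → ℝ := fun m => (m + 1 : ℝ)⁻¹
  have hρ : ∀ m, 0 < ρ m := fun m => by positivity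
  let inner : ℕ × ℕ → Set X := fun n => Metric.closedBall (q n.1) (ρ n.2)
  let outer : ℕ × ℕ → Set X := fun n => Metric.ball (q n.1) (2 * ρ n.2)
  have hbump : ∀ n, ∃ φ : C(X, ℝ), EqOn φ 0 (outer n)ᶜ ∧ EqOn φ 1 (inner n) := fun n =>
    let ⟨φ, h0, h1, _⟩ := exists_continuous_zero_one_of_isClosed
      Metric.isOpen_ball.isClosed_compl Metric.isClosed_closedBall
      (disjoint_compl_left_iff_subset.2 (Metric.closedBall_subset_ball (by linarith [hρ n.2])))
    ⟨φ, h0, h1⟩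
  have hhit : ∀ n, ∃ S : C(X, ℝ), Icc 0 1 ⊆ S '' inner n := fun n =>
    hM.exists_Icc_subset_image Metric.isClosed_closedBall
      ((hcard _ Metric.isOpen_ball (Metric.nonempty_ball.2 (hρ n.2))).trans
        (mk_le_mk_of_subset Metric.ball_subset_closedBall))
  choose φ hφ0 hφ1 using hbump
  choose S hS using hhit
  exact ⟨⟨inner, outer, φ, S, hφ1, hφ0, hS, fun _ _ hW hx =>
    hq.exists_mem_closedBall_ball_subset hW hx⟩⟩

theorem separableSpace_biPointOpen (hM : HypothesisM) {X : Type*} [MetricSpace X]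
    [SeparableSpace X] [Nonempty X] (hcard : ∀ U : Set X, IsOpen U → U.Nonempty → 𝔠 ≤ #U) :
    @SeparableSpace C(X, ℝ) (biPointOpenTopology X) := by
  obtain ⟨B⟩ := hM.nonempty_bumpSystem hcard
  have hinf : ∀ V : Set X, IsOpen V → V.Nonempty → V.Infinite := fun V hV hne =>
    infinite_coe_iff.1 (infinite_iff.2 (aleph0_le_continuum.trans (hcard V hV hne)))
  refine @SeparableSpace.mk _ (biPointOpenTopology X) ⟨range B.combination, countable_range _,
    dense_biPointOpen_of_forall_nhd fun f₀ A ε H hε hH => ?_⟩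
  obtain ⟨s, hs⟩ := B.exists_combination_mem_biPointOpenNhd hinf f₀ A hε H hH
  exact ⟨_, hs, s, rfl⟩

end HypothesisM

/-- Under hypothesis (M), for a nonempty separable metrizable space `X`,
`C_ph(X)` is separable iff `Δ(X) = 𝔠`. -/
theorem stmt14 (hM : HypothesisM) {X : Type*} [TopologicalSpace X] [MetrizableSpace X]
    [SeparableSpace X] [Nonempty X] :
    @SeparableSpace C(X, ℝ) (biPointOpenTopology X) ↔
      dispersionCharacter X = Cardinal.continuum := by
  let _ : MetricSpace X := TopologicalSpace.metrizableSpaceMetric X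
  constructor
  · intro hsep
    exact dispersionCharacter_eq_continuum mk_le_continuum_of_secondCountableTopology
      fun U hU hne => continuum_le_mk_of_separableSpace_biPointOpen hsep hU hne
  · intro hΔ
    exact hM.separableSpace_biPointOpen fun U hU hne => hΔ ▸ dispersionCharacter_le_mk hU hne
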